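/- arXiv:2312.08637 — 7 statements merged into one kernel-verified Lean document; each statement's English description precedes it below -/
import Mathlib

section
/- Let 0 < σ₁' < σ₁ and 0 < σ₂' < σ₂ and β₁, β₁', β₂, β₂' ∈ ℝ. Then √(σ₁'/σ₁)·exp(−(β₁−β₁')²/(4(σ₁−σ₁'))) · √(σ₂'/σ₂)·exp(−(β₂−β₂')²/(4(σ₂−σ₂'))) < √((σ₁'+σ₂')/(σ₁+σ₂))·exp(−(β₁+β₂−β₁'−β₂')²/(4(σ₁+σ₂−σ₁'−σ₂'))). -/
lemma sqrt_part (a a' b b' : ℝ) (h1 : 0 < a') (h1' : a' < a) (h2 : 0 < b')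
    (h2' : b' < b) :
    Real.sqrt (a' / a) * Real.sqrt (b' / b) < Real.sqrt ((a' + b') / (a + b)) := by
  have ha : 0 < a := h1.trans h1'
  have hb : 0 < b := h2.trans h2'
  rw [← Real.sqrt_mul (by positivity)]
  apply Real.sqrt_lt_sqrt (by positivity)
  rw [div_mul_div_comm, div_lt_div_iff₀ (by positivity) (by positivity)]
  nlinarith [mul_pos h1 (sub_pos.2 h2'), mul_pos h2 (sub_pos.2 h1'),
    mul_pos (mul_pos h1 h2) (sub_pos.2 h1')]

lemma exp_part (x y s t : ℝ) (hs : 0 < s) (ht : 0 < t) :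
    Real.exp (-x ^ 2 / (4 * s)) * Real.exp (-y ^ 2 / (4 * t)) ≤
      Real.exp (-(x + y) ^ 2 / (4 * (s + t))) := by
  rw [← Real.exp_add, Real.exp_le_exp]
  rw [div_add_div _ _ (by positivity) (by positivity), div_le_div_iff₀ (by positivity) (by positivity)]
  nlinarith [sq_nonneg (x * t - y * s), sq_nonneg x, sq_nonneg y, mul_pos hs ht,
    mul_pos (mul_pos hs ht) (mul_pos hs ht)]

theorem key_strict_ineq (σ₁ σ₁' σ₂ σ₂' β₁ β₁' β₂ β₂' : ℝ)
    (h1 : 0 < σ₁') (h1' : σ₁' < σ₁) (h2 : 0 < σ₂') (h2' : σ₂' < σ₂) :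
    Real.sqrt (σ₁' / σ₁) * Real.exp (-(β₁ - β₁') ^ 2 / (4 * (σ₁ - σ₁'))) *
      (Real.sqrt (σ₂' / σ₂) * Real.exp (-(β₂ - β₂') ^ 2 / (4 * (σ₂ - σ₂')))) <
    Real.sqrt ((σ₁' + σ₂') / (σ₁ + σ₂)) *
      Real.exp (-(β₁ + β₂ - β₁' - β₂') ^ 2 / (4 * (σ₁ + σ₂ - σ₁' - σ₂'))) := by
  have hs : 0 < σ₁ - σ₁' := sub_pos.2 h1'
  have ht : 0 < σ₂ - σ₂' := sub_pos.2 h2'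
  have hsq := sqrt_part σ₁ σ₁' σ₂ σ₂' h1 h1' h2 h2'
  have hex := exp_part (β₁ - β₁') (β₂ - β₂') (σ₁ - σ₁') (σ₂ - σ₂') hs ht
  have heq : (β₁ - β₁' + (β₂ - β₂')) = β₁ + β₂ - β₁' - β₂' := by ring
  have heq2 : (σ₁ - σ₁' + (σ₂ - σ₂')) = σ₁ + σ₂ - σ₁' - σ₂' := by ring
  rw [heq, heq2] at hex
  have h1a : 0 < σ₁ := h1.trans h1'
  have h2a : 0 < σ₂ := h2.trans h2'
  calc Real.sqrt (σ₁' / σ₁) * Real.exp (-(β₁ - β₁') ^ 2 / (4 * (σ₁ - σ₁'))) *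
      (Real.sqrt (σ₂' / σ₂) * Real.exp (-(β₂ - β₂') ^ 2 / (4 * (σ₂ - σ₂'))))
      = (Real.sqrt (σ₁' / σ₁) * Real.sqrt (σ₂' / σ₂)) *
        (Real.exp (-(β₁ - β₁') ^ 2 / (4 * (σ₁ - σ₁'))) *
          Real.exp (-(β₂ - β₂') ^ 2 / (4 * (σ₂ - σ₂')))) := by ring
    _ < Real.sqrt ((σ₁' + σ₂') / (σ₁ + σ₂)) *
        Real.exp (-(β₁ + β₂ - β₁' - β₂') ^ 2 / (4 * (σ₁ + σ₂ - σ₁' - σ₂'))) := by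
        apply mul_lt_mul hsq hex (by positivity)
        positivity
end

section
/- Let 0 < σ' < σ, β, β' ∈ ℝ, and let b = exp(−(β−β')²/(4(σ−σ'))) and κ satisfy 0 < |κ| < √(σ'/σ)·b. Define a = (σκ² − σ'b²)/(κ² − b²). Then 0 < a < σ' and |κ| = √((σ'−a)/(σ−a))·b. -/
theorem gaussian_factor_extraction (σ σ' β β' κ : ℝ)
    (h : 0 < σ') (h' : σ' < σ)
    (hκ0 : 0 < |κ|)
    (hκ : |κ| < Real.sqrt (σ' / σ) * Real.exp (-(β - β') ^ 2 / (4 * (σ - σ')))) :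
    let b := Real.exp (-(β - β') ^ 2 / (4 * (σ - σ')))
    let a := (σ * κ ^ 2 - σ' * b ^ 2) / (κ ^ 2 - b ^ 2)
    (0 < a ∧ a < σ') ∧ |κ| = Real.sqrt ((σ' - a) / (σ - a)) * b := by
  intro b a
  have hb : 0 < b := Real.exp_pos _
  have hσ : 0 < σ := h.trans h'
  have hrat : (0:ℝ) < σ' / σ := div_pos h hσ
  have hκne : κ ≠ 0 := by
    intro hk; simp [hk] at hκ0
  have hκsq : 0 < κ ^ 2 := by positivity
  have hsq : Real.sqrt (σ' / σ) ^ 2 = σ' / σ := Real.sq_sqrt hrat.le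
  have hκ2 : κ ^ 2 < σ' / σ * b ^ 2 := by
    have h1 : |κ| * |κ| < (Real.sqrt (σ' / σ) * b) * (Real.sqrt (σ' / σ) * b) :=
      mul_self_lt_mul_self (abs_nonneg κ) hκ
    have h2 : |κ| * |κ| = κ ^ 2 := by rw [← abs_mul, abs_mul_self]; ring
    nlinarith [hsq]
  have hfrac : σ' / σ < 1 := (div_lt_one hσ).mpr h'
  have hκb : κ ^ 2 < b ^ 2 := by nlinarith
  have hd : κ ^ 2 - b ^ 2 < 0 := by linarith
  have hdne : κ ^ 2 - b ^ 2 ≠ 0 := ne_of_lt hd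
  have hnum : σ * κ ^ 2 - σ' * b ^ 2 < 0 := by
    have : σ * (σ' / σ) = σ' := mul_div_cancel₀ σ' hσ.ne'
    nlinarith [mul_lt_mul_of_pos_left hκ2 hσ]
  have ha_pos : 0 < a := div_pos_of_neg_of_neg hnum hd
  have ha_lt : a < σ' := by
    have := (div_lt_iff_of_neg hd).mpr (show σ' * (κ ^ 2 - b ^ 2) < σ * κ ^ 2 - σ' * b ^ 2 by
      nlinarith)
    exact this
  refine ⟨⟨ha_pos, ha_lt⟩, ?_⟩
  have hbk : b ^ 2 - κ ^ 2 ≠ 0 := by linarith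
  have haeq : a * (κ ^ 2 - b ^ 2) = σ * κ ^ 2 - σ' * b ^ 2 :=
    div_mul_cancel₀ _ hdne
  have ha1 : σ' - a = (σ - σ') * κ ^ 2 / (b ^ 2 - κ ^ 2) := by
    rw [eq_div_iff hbk]; linear_combination haeq
  have ha2 : σ - a = (σ - σ') * b ^ 2 / (b ^ 2 - κ ^ 2) := by
    rw [eq_div_iff hbk]; linear_combination haeq
  have hratio : (σ' - a) / (σ - a) = κ ^ 2 / b ^ 2 := by
    have hss : σ - σ' ≠ 0 := by linarith
    rw [ha1, ha2]
    field_simp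
  rw [hratio, Real.sqrt_div (sq_nonneg κ), Real.sqrt_sq_eq_abs, Real.sqrt_sq hb.le,
    div_mul_cancel₀ _ hb.ne']
end

section
/- Let f : ℝ × ZMod 2 → ℂ be defined by f(s, 0) = exp(−σs² + iβs) and f(s, 1) = κ·exp(−σ's² + iβ's), where σ, σ' ≥ 0 and β, β', κ ∈ ℝ. Then f is the Fourier transform (characteristic function) of the signed measure μ on ℝ × ZMod 2 given on Borel sets B ⊆ ℝ by μ(B × {0}) = ½(γ_σ * δ_β + κ·γ_{σ'} * δ_{β'})(B) and μ(B × {1}) = ½(γ_σ * δ_β − κ·γ_{σ'} * δ_{β'})(B), where γ_a denotes the Gaussian measure on ℝ with density (1/(2√(πa)))·exp(−t²/(4a)) (and γ_0 = δ_0). -/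
open MeasureTheory Complex
open scoped ENNReal

/-- The Gaussian measure `γ_a` on `ℝ` with density `(1/(2√(πa)))·exp(−t²/(4a))`
for `a > 0`, and `γ_0 = δ_0`. -/
noncomputable def gaussMeasure (a : ℝ) : Measure ℝ :=
  if a = 0 then Measure.dirac 0
  else volume.withDensity
    (fun t => ENNReal.ofReal (1 / (2 * Real.sqrt (Real.pi * a)) * Real.exp (-t ^ 2 / (4 * a))))

/-!
`γ_a` is the centred normal law of variance `2a` (a Dirac mass when `a = 0`), so `γ_a * δ_β` is
`N(β, 2a)`, whose characteristic function is `exp(iβs − as²)`. On `ℝ × ZMod 2` the character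
`(−1)^{kl}` only weighs the two slices by `1` and `(−1)^l`, and `λ₀ ± λ₁` recovers
`γ_σ * δ_β` for `l = 0` and `κ·γ_{σ'} * δ_{β'}` for `l = 1`.
-/

open ProbabilityTheory

lemma gaussMeasure_eq_gaussianReal {a : ℝ} (ha : 0 ≤ a) :
    gaussMeasure a = gaussianReal 0 (2 * a).toNNReal := by
  rcases ha.eq_or_lt with rfl | ha
  · simp [gaussMeasure]
  have hv : (2 * a).toNNReal ≠ 0 := by simpa using ha
  rw [gaussMeasure, if_neg ha.ne', gaussianReal_of_var_ne_zero _ hv]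
  congr 1
  ext t
  have hsqrt : √(2 * Real.pi * (2 * a)) = 2 * √(Real.pi * a) := by
    rw [show 2 * Real.pi * (2 * a) = 2 ^ 2 * (Real.pi * a) by ring, Real.sqrt_mul (by positivity),
      Real.sqrt_sq zero_le_two]
  simp only [gaussianPDF_def, gaussianPDFReal_def,
    Real.coe_toNNReal _ (by positivity : 0 ≤ 2 * a), hsqrt, sub_zero, one_div]
  ring_nf

lemma integral_cexp_map_add_gaussMeasure {a : ℝ} (ha : 0 ≤ a) (β s : ℝ) :
    ∫ t : ℝ, Complex.exp (I * t * s) ∂((gaussMeasure a).map (· + β)) =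
      Complex.exp (-(a : ℂ) * s ^ 2 + I * β * s) :=
  calc ∫ t : ℝ, Complex.exp (I * t * s) ∂((gaussMeasure a).map (· + β))
      _ = charFun (gaussianReal β (2 * a).toNNReal) s := by
        rw [gaussMeasure_eq_gaussianReal ha, gaussianReal_map_add_const, zero_add,
          charFun_apply_real]
        congr 1 with t
        ring_nf
      _ = Complex.exp (-(a : ℂ) * s ^ 2 + I * β * s) := by
        rw [charFun_gaussianReal, Real.coe_toNNReal _ (by positivity)]
        push_cast
        ring_nf

lemma half_add_add_neg_one_pow_mul_half_sub {R : Type*} [Field R] [NeZero (2 : R)] (x y : R)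
    (l : ZMod 2) :
    1 / 2 * (x + y) + (-1) ^ l.val * (1 / 2 * (x - y)) = if l = 0 then x else y := by
  obtain rfl | rfl : l = 0 ∨ l = 1 := by revert l; decide
  · rw [ZMod.val_zero, pow_zero, if_pos rfl]; field_simp; ring
  · rw [ZMod.val_one, pow_one, if_neg one_ne_zero]; field_simp; ring

/-- The characteristic function of the signed measure `μ` on `ℝ × ZMod 2` whose slices are
`λ₀ = ½(γ_σ*δ_β + κ·γ_{σ'}*δ_{β'})` on `ℝ × {0}` and
`λ₁ = ½(γ_σ*δ_β − κ·γ_{σ'}*δ_{β'})` on `ℝ × {1}`;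
the characteristic function `μ̂(s,l) = ∫ e^{its}(−1)^{kl} dμ(t,k)` is written out by
linearity of the integral in the signed measure. -/
theorem char_fun_of_signed_measure (σ σ' β β' κ : ℝ) (hσ : 0 ≤ σ) (hσ' : 0 ≤ σ') :
    let ν₁ : Measure ℝ := (gaussMeasure σ).map (· + β)   -- γ_σ * δ_β
    let ν₂ : Measure ℝ := (gaussMeasure σ').map (· + β') -- γ_{σ'} * δ_{β'}
    ∀ (s : ℝ) (l : ZMod 2),
      -- ∫_{ℝ×{0}} e^{its} dλ₀, expanded by linearity
      ((1 : ℂ) / 2) * ((∫ t : ℝ, Complex.exp (I * t * s) ∂ν₁) +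
          κ * ∫ t : ℝ, Complex.exp (I * t * s) ∂ν₂) +
      -- ∫_{ℝ×{1}} e^{its}(−1)^l dλ₁, expanded by linearity
      (-1 : ℂ) ^ l.val * (((1 : ℂ) / 2) * ((∫ t : ℝ, Complex.exp (I * t * s) ∂ν₁) -
          κ * ∫ t : ℝ, Complex.exp (I * t * s) ∂ν₂)) =
        if l = 0 then Complex.exp (-(σ : ℂ) * s ^ 2 + I * β * s)
        else κ * Complex.exp (-(σ' : ℂ) * s ^ 2 + I * β' * s) := by
  intro ν₁ ν₂ s l
  rw [integral_cexp_map_add_gaussMeasure hσ, integral_cexp_map_add_gaussMeasure hσ']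
  exact half_add_add_neg_one_pow_mul_half_sub _ _ l
end

section
/- Suppose σ = σ₁ + σ₂, σ' = σ₁' + σ₂', β = β₁ + β₂, β' = β₁' + β₂', κ = κ₁κ₂, where for each j ∈ {1,2} either (0 < σⱼ' < σⱼ and 0 < |κⱼ| ≤ √(σⱼ'/σⱼ)·exp(−(βⱼ−βⱼ')²/(4(σⱼ−σⱼ')))) or (0 ≤ σⱼ = σⱼ', βⱼ = βⱼ', 0 < |κⱼ| ≤ 1). If 0 < σ' < σ and |κ| = √(σ'/σ)·exp(−(β−β')²/(4(σ−σ'))), then for at least one j the second alternative holds with σⱼ = σⱼ' = 0 and |κⱼ| = 1. -/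
private lemma engel (x y s t : ℝ) (hs : 0 < s) (ht : 0 < t) :
    (x + y) ^ 2 / (s + t) ≤ x ^ 2 / s + y ^ 2 / t := by
  rw [div_add_div _ _ hs.ne' ht.ne', div_le_div_iff₀ (by positivity) (by positivity)]
  nlinarith [sq_nonneg (x * t - y * s), mul_pos hs ht]

private lemma ratio_strict (a b c d : ℝ) (ha : 0 < a) (hab : a < b) (hc : 0 < c)
    (hcd : c < d) : a * c / (b * d) < (a + c) / (b + d) := by
  have hb : 0 < b := ha.trans hab
  have hd : 0 < d := hc.trans hcd
  rw [div_lt_div_iff₀ (by positivity) (by positivity)]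
  nlinarith [mul_pos ha hc, mul_pos (sub_pos.mpr hab) (sub_pos.mpr hcd),
    mul_pos ha (sub_pos.mpr hcd), mul_pos hc (sub_pos.mpr hab)]

private lemma ratio_add (a b t : ℝ) (ha : 0 < a) (hab : a < b) (ht : 0 < t) :
    a / b < (a + t) / (b + t) := by
  have hb : 0 < b := ha.trans hab
  rw [div_lt_div_iff₀ (by positivity) (by positivity)]
  nlinarith

theorem extremal_forces_degenerate
    (σ σ' β β' κ σ₁ σ₁' β₁ β₁' κ₁ σ₂ σ₂' β₂ β₂' κ₂ : ℝ)
    (hσ : σ = σ₁ + σ₂) (hσ' : σ' = σ₁' + σ₂')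
    (hβ : β = β₁ + β₂) (hβ' : β' = β₁' + β₂') (hκ : κ = κ₁ * κ₂)
    (h1 : (0 < σ₁' ∧ σ₁' < σ₁ ∧ 0 < |κ₁| ∧
            |κ₁| ≤ Real.sqrt (σ₁' / σ₁) * Real.exp (-(β₁ - β₁') ^ 2 / (4 * (σ₁ - σ₁')))) ∨
          (0 ≤ σ₁ ∧ σ₁ = σ₁' ∧ β₁ = β₁' ∧ 0 < |κ₁| ∧ |κ₁| ≤ 1))
    (h2 : (0 < σ₂' ∧ σ₂' < σ₂ ∧ 0 < |κ₂| ∧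
            |κ₂| ≤ Real.sqrt (σ₂' / σ₂) * Real.exp (-(β₂ - β₂') ^ 2 / (4 * (σ₂ - σ₂')))) ∨
          (0 ≤ σ₂ ∧ σ₂ = σ₂' ∧ β₂ = β₂' ∧ 0 < |κ₂| ∧ |κ₂| ≤ 1))
    (hpos : 0 < σ') (hlt : σ' < σ)
    (hext : |κ| = Real.sqrt (σ' / σ) * Real.exp (-(β - β') ^ 2 / (4 * (σ - σ')))) :
    (σ₁ = 0 ∧ σ₁' = 0 ∧ β₁ = β₁' ∧ |κ₁| = 1) ∨
      (σ₂ = 0 ∧ σ₂' = 0 ∧ β₂ = β₂' ∧ |κ₂| = 1) := by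
  subst hσ hσ' hβ hβ' hκ
  rcases h1 with ⟨ha1, hb1, hc1, hd1⟩ | ⟨ha1, hb1, hc1, hd1, he1⟩
  · rcases h2 with ⟨ha2, hb2, hc2, hd2⟩ | ⟨ha2, hb2, hc2, hd2, he2⟩
    · -- both nondegenerate: contradiction with extremality
      exfalso
      have hσ₁ : 0 < σ₁ := ha1.trans hb1
      have hσ₂ : 0 < σ₂ := ha2.trans hb2
      have hs1 : 0 < σ₁ - σ₁' := sub_pos.mpr hb1
      have hs2 : 0 < σ₂ - σ₂' := sub_pos.mpr hb2
      have hE : Real.exp (-(β₁ - β₁') ^ 2 / (4 * (σ₁ - σ₁'))) *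
          Real.exp (-(β₂ - β₂') ^ 2 / (4 * (σ₂ - σ₂'))) ≤
          Real.exp (-((β₁ + β₂) - (β₁' + β₂')) ^ 2 /
            (4 * ((σ₁ + σ₂) - (σ₁' + σ₂')))) := by
        rw [← Real.exp_add]
        apply Real.exp_le_exp.mpr
        have := engel (β₁ - β₁') (β₂ - β₂') (4 * (σ₁ - σ₁')) (4 * (σ₂ - σ₂'))
          (by linarith) (by linarith)
        have e1 : (β₁ - β₁') + (β₂ - β₂') = (β₁ + β₂) - (β₁' + β₂') := by ring
        have e2 : 4 * (σ₁ - σ₁') + 4 * (σ₂ - σ₂') = 4 * ((σ₁ + σ₂) - (σ₁' + σ₂')) := by ring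
        rw [e1, e2] at this
        have h0 : 0 < 4 * ((σ₁ + σ₂) - (σ₁' + σ₂')) := by linarith
        rw [neg_div, neg_div, neg_div, ← neg_add]
        linarith
      have hS : Real.sqrt (σ₁' / σ₁) * Real.sqrt (σ₂' / σ₂) <
          Real.sqrt ((σ₁' + σ₂') / (σ₁ + σ₂)) := by
        rw [← Real.sqrt_mul (by positivity)]
        apply Real.sqrt_lt_sqrt (by positivity)
        rw [div_mul_div_comm]
        exact ratio_strict _ _ _ _ ha1 hb1 ha2 hb2
      have hEpos : 0 < Real.exp (-((β₁ + β₂) - (β₁' + β₂')) ^ 2 /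
          (4 * ((σ₁ + σ₂) - (σ₁' + σ₂')))) := Real.exp_pos _
      have key : |κ₁ * κ₂| < Real.sqrt ((σ₁' + σ₂') / (σ₁ + σ₂)) *
          Real.exp (-((β₁ + β₂) - (β₁' + β₂')) ^ 2 /
            (4 * ((σ₁ + σ₂) - (σ₁' + σ₂')))) := by
        rw [abs_mul]
        calc |κ₁| * |κ₂| ≤
            (Real.sqrt (σ₁' / σ₁) * Real.exp (-(β₁ - β₁') ^ 2 / (4 * (σ₁ - σ₁')))) *
            (Real.sqrt (σ₂' / σ₂) * Real.exp (-(β₂ - β₂') ^ 2 / (4 * (σ₂ - σ₂')))) :=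
              mul_le_mul hd1 hd2 (abs_nonneg _) (by positivity)
          _ = (Real.sqrt (σ₁' / σ₁) * Real.sqrt (σ₂' / σ₂)) *
              (Real.exp (-(β₁ - β₁') ^ 2 / (4 * (σ₁ - σ₁'))) *
               Real.exp (-(β₂ - β₂') ^ 2 / (4 * (σ₂ - σ₂')))) := by ring
          _ ≤ (Real.sqrt (σ₁' / σ₁) * Real.sqrt (σ₂' / σ₂)) *
              Real.exp (-((β₁ + β₂) - (β₁' + β₂')) ^ 2 /
                (4 * ((σ₁ + σ₂) - (σ₁' + σ₂')))) := by
              apply mul_le_mul_of_nonneg_left hE (by positivity)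
          _ < _ := by exact mul_lt_mul_of_pos_right hS hEpos
      linarith [hext, key]
    · -- factor 2 degenerate form
      have hσ₁ : 0 < σ₁ := ha1.trans hb1
      subst hb2 hc2
      rcases lt_or_eq_of_le ha2 with hσ₂ | hσ₂
      · -- σ₂ > 0 : contradiction
        exfalso
        have e1 : (β₁ + β₂) - (β₁' + β₂) = β₁ - β₁' := by ring
        have e2 : (σ₁ + σ₂) - (σ₁' + σ₂) = σ₁ - σ₁' := by ring
        rw [e1, e2] at hext
        have hS : Real.sqrt (σ₁' / σ₁) < Real.sqrt ((σ₁' + σ₂) / (σ₁ + σ₂)) :=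
          Real.sqrt_lt_sqrt (by positivity) (ratio_add _ _ _ ha1 hb1 hσ₂)
        have key : |κ₁ * κ₂| < Real.sqrt ((σ₁' + σ₂) / (σ₁ + σ₂)) *
            Real.exp (-(β₁ - β₁') ^ 2 / (4 * (σ₁ - σ₁'))) := by
          rw [abs_mul]
          calc |κ₁| * |κ₂| ≤
              (Real.sqrt (σ₁' / σ₁) * Real.exp (-(β₁ - β₁') ^ 2 / (4 * (σ₁ - σ₁')))) * 1 :=
                mul_le_mul hd1 he2 (abs_nonneg _) (by positivity)
            _ = Real.sqrt (σ₁' / σ₁) * Real.exp (-(β₁ - β₁') ^ 2 / (4 * (σ₁ - σ₁'))) := by ring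
            _ < _ := mul_lt_mul_of_pos_right hS (Real.exp_pos _)
        linarith [hext, key]
      · -- σ₂ = 0
        right
        refine ⟨hσ₂.symm, hσ₂.symm, rfl, ?_⟩
        have e1 : (β₁ + β₂) - (β₁' + β₂) = β₁ - β₁' := by ring
        have e2 : (σ₁ + σ₂) - (σ₁' + σ₂) = σ₁ - σ₁' := by ring
        have e3 : (σ₁' + σ₂) / (σ₁ + σ₂) = σ₁' / σ₁ := by rw [← hσ₂]; simp
        rw [e1, e2, e3, abs_mul] at hext
        set B := Real.sqrt (σ₁' / σ₁) * Real.exp (-(β₁ - β₁') ^ 2 / (4 * (σ₁ - σ₁')))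
        have hBpos : 0 < B := lt_of_lt_of_le hc1 hd1
        refine le_antisymm he2 ?_
        nlinarith [hext, hd1, he2, abs_nonneg κ₂, abs_nonneg κ₁]
  · rcases h2 with ⟨ha2, hb2, hc2, hd2⟩ | ⟨ha2, hb2, hc2, hd2, he2⟩
    · -- factor 1 degenerate form
      have hσ₂ : 0 < σ₂ := ha2.trans hb2
      subst hb1 hc1
      rcases lt_or_eq_of_le ha1 with hσ₁ | hσ₁
      · exfalso
        have e1 : (β₁ + β₂) - (β₁ + β₂') = β₂ - β₂' := by ring
        have e2 : (σ₁ + σ₂) - (σ₁ + σ₂') = σ₂ - σ₂' := by ring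
        rw [e1, e2] at hext
        have hS : Real.sqrt (σ₂' / σ₂) < Real.sqrt ((σ₁ + σ₂') / (σ₁ + σ₂)) := by
          apply Real.sqrt_lt_sqrt (by positivity)
          have := ratio_add σ₂' σ₂ σ₁ ha2 hb2 hσ₁
          calc σ₂' / σ₂ < (σ₂' + σ₁) / (σ₂ + σ₁) := this
            _ = (σ₁ + σ₂') / (σ₁ + σ₂) := by ring_nf
        have key : |κ₁ * κ₂| < Real.sqrt ((σ₁ + σ₂') / (σ₁ + σ₂)) *
            Real.exp (-(β₂ - β₂') ^ 2 / (4 * (σ₂ - σ₂'))) := by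
          rw [abs_mul, mul_comm |κ₁| |κ₂|]
          calc |κ₂| * |κ₁| ≤
              (Real.sqrt (σ₂' / σ₂) * Real.exp (-(β₂ - β₂') ^ 2 / (4 * (σ₂ - σ₂')))) * 1 :=
                mul_le_mul hd2 he1 (abs_nonneg _) (by positivity)
            _ = Real.sqrt (σ₂' / σ₂) * Real.exp (-(β₂ - β₂') ^ 2 / (4 * (σ₂ - σ₂'))) := by ring
            _ < _ := mul_lt_mul_of_pos_right hS (Real.exp_pos _)
        linarith [hext, key]
      · left
        refine ⟨hσ₁.symm, hσ₁.symm, rfl, ?_⟩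
        have e1 : (β₁ + β₂) - (β₁ + β₂') = β₂ - β₂' := by ring
        have e2 : (σ₁ + σ₂) - (σ₁ + σ₂') = σ₂ - σ₂' := by ring
        have e3 : (σ₁ + σ₂') / (σ₁ + σ₂) = σ₂' / σ₂ := by rw [← hσ₁]; simp
        rw [e1, e2, e3, abs_mul] at hext
        set B := Real.sqrt (σ₂' / σ₂) * Real.exp (-(β₂ - β₂') ^ 2 / (4 * (σ₂ - σ₂')))
        have hBpos : 0 < B := lt_of_lt_of_le hc2 hd2
        refine le_antisymm he1 ?_
        nlinarith [hext, hd2, he1, abs_nonneg κ₁, abs_nonneg κ₂]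
    · exfalso
      subst hb1 hb2
      linarith
end

section
/- Let 0 < σ' < σ, β, β' ∈ ℝ, and 0 < |κ| < √(σ'/σ)·exp(−(β−β')²/(4(σ−σ'))). Then there exist a ∈ ℝ with 0 < a < σ' such that, setting τ = σ − a and τ' = σ' − a, one has 0 < τ' < τ and |κ| = √(τ'/τ)·exp(−(β−β')²/(4(τ−τ'))). -/
theorem nonextremal_decomposition (σ σ' β β' κ : ℝ)
    (h : 0 < σ') (h' : σ' < σ) (hκ0 : 0 < |κ|)
    (hκ : |κ| < Real.sqrt (σ' / σ) * Real.exp (-(β - β') ^ 2 / (4 * (σ - σ')))) :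
    ∃ a : ℝ, 0 < a ∧ a < σ' ∧
      (0 < σ' - a ∧ σ' - a < σ - a ∧
        |κ| = Real.sqrt ((σ' - a) / (σ - a)) *
          Real.exp (-(β - β') ^ 2 / (4 * ((σ - a) - (σ' - a))))) := by
  have hσ : 0 < σ := h.trans h'
  set C := Real.exp (-(β - β') ^ 2 / (4 * (σ - σ'))) with hCdef
  have hC : 0 < C := Real.exp_pos _
  set r := |κ| / C with hrdef
  have hr0 : 0 < r := div_pos hκ0 hC
  have hrlt : r < Real.sqrt (σ' / σ) := by
    rw [hrdef, div_lt_iff₀ hC]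
    exact hκ
  have hdiv : (0:ℝ) ≤ σ' / σ := le_of_lt (div_pos h hσ)
  have hr2 : r ^ 2 < σ' / σ := by
    have := pow_lt_pow_left₀ hrlt hr0.le (n := 2) two_ne_zero
    rwa [Real.sq_sqrt hdiv] at this
  have hr2lt1 : r ^ 2 < 1 := hr2.trans_le (by
    rw [div_le_one hσ]; exact h'.le)
  have hden : 0 < 1 - r ^ 2 := by linarith
  have hnum : 0 < σ' - r ^ 2 * σ := by
    have := (lt_div_iff₀ hσ).mp hr2
    linarith
  refine ⟨(σ' - r ^ 2 * σ) / (1 - r ^ 2), div_pos hnum hden, ?_, ?_, ?_, ?_⟩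
  · rw [div_lt_iff₀ hden]
    have := mul_lt_mul_of_pos_left h' (pow_pos hr0 2)
    linarith
  · have : σ' - (σ' - r ^ 2 * σ) / (1 - r ^ 2) = r ^ 2 * (σ - σ') / (1 - r ^ 2) := by
      field_simp; ring
    rw [this]
    exact div_pos (mul_pos (pow_pos hr0 2) (sub_pos.mpr h')) hden
  · have : σ - (σ' - r ^ 2 * σ) / (1 - r ^ 2) - (σ' - (σ' - r ^ 2 * σ) / (1 - r ^ 2)) = σ - σ' := by
      ring
    linarith [this ▸ (sub_pos.mpr h')]
  · set a := (σ' - r ^ 2 * σ) / (1 - r ^ 2) with hadef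
    have h1 : σ' - a = r ^ 2 * (σ - σ') / (1 - r ^ 2) := by
      rw [hadef]; field_simp; ring
    have h2 : σ - a = (σ - σ') / (1 - r ^ 2) := by
      rw [hadef]; field_simp; ring
    have hσσ' : (0:ℝ) < σ - σ' := sub_pos.mpr h'
    have hratio : (σ' - a) / (σ - a) = r ^ 2 := by
      rw [h1, h2]
      rw [div_div_div_eq]
      field_simp
    have hexp : σ - a - (σ' - a) = σ - σ' := by ring
    rw [hratio, hexp, Real.sqrt_sq hr0.le, ← hCdef, hrdef]
    field_simp
end

section
/- Let 0 < σ' < σ, β, β' ∈ ℝ, and 0 < |κ| < √(σ'/σ)·exp(−(β−β')²/(4(σ−σ'))). Then for every ε > 0 there exist σ₁, σ₁' with 0 < σ₁' < σ₁ < ε and κ₁ = √(σ₁'/σ₁) with 1 − ε < κ₁ such that, setting τ = σ − σ₁, τ' = σ' − σ₁', ς = κ/κ₁, one has 0 < τ' < τ and 0 < |ς| < √(τ'/τ)·exp(−(β−β')²/(4(τ−τ'))). -/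
theorem splitting_step (σ σ' β β' κ : ℝ)
    (h : 0 < σ') (h' : σ' < σ) (hκ0 : 0 < |κ|)
    (hκ : |κ| < Real.sqrt (σ' / σ) * Real.exp (-(β - β') ^ 2 / (4 * (σ - σ')))) :
    ∀ ε : ℝ, 0 < ε → ∃ σ₁ σ₁' : ℝ, 0 < σ₁' ∧ σ₁' < σ₁ ∧ σ₁ < ε ∧
      (let κ₁ := Real.sqrt (σ₁' / σ₁)
       let τ := σ - σ₁
       let τ' := σ' - σ₁'
       let ς := κ / κ₁
       1 - ε < κ₁ ∧ 0 < τ' ∧ τ' < τ ∧ 0 < |ς| ∧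
         |ς| < Real.sqrt (τ' / τ) * Real.exp (-(β - β') ^ 2 / (4 * (τ - τ')))) := by
  intro ε hε
  set R : ℝ := Real.sqrt (σ' / σ) * Real.exp (-(β - β') ^ 2 / (4 * (σ - σ'))) with hR
  have hσ : 0 < σ := h.trans h'
  have hR0 : 0 < R := by
    apply mul_pos
    · exact Real.sqrt_pos.2 (div_pos h hσ)
    · exact Real.exp_pos _
  set a : ℝ := max (1 - ε) (|κ| / R) with ha
  have ha1 : a < 1 := max_lt (by linarith) ((div_lt_one hR0).2 hκ)
  have ha0 : 0 < a := lt_max_of_lt_right (div_pos hκ0 hR0)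
  set s : ℝ := (a + 1) / 2 with hs
  have hs0 : 0 < s := by positivity
  have hsa : a < s := by simp only [hs]; linarith
  have hs1 : s < 1 := by simp only [hs]; linarith
  set t : ℝ := s ^ 2 with ht
  have ht0 : 0 < t := by positivity
  have ht1 : t < 1 := by nlinarith
  have hκs : |κ| / s < R := by
    rw [div_lt_iff₀ hs0]
    have : |κ| / R < s := lt_of_le_of_lt (le_max_right _ _) hsa
    calc |κ| = (|κ| / R) * R := by field_simp
    _ < s * R := by nlinarith
    _ = R * s := mul_comm _ _
  set G : ℝ → ℝ := fun x => Real.sqrt ((σ' - t * x) / (σ - x)) *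
      Real.exp (-(β - β') ^ 2 / (4 * (σ - σ' - (1 - t) * x))) with hG
  have hcG : ContinuousAt G 0 := by
    apply ContinuousAt.mul
    · apply ContinuousAt.comp Real.continuous_sqrt.continuousAt
      exact ContinuousAt.div (by fun_prop) (by fun_prop) (by simp; linarith)
    · apply ContinuousAt.comp Real.continuous_exp.continuousAt
      exact ContinuousAt.div (by fun_prop) (by fun_prop) (by simp; intro hh; linarith)
  have hG0 : G 0 = R := by simp [hG, hR]
  have htend : Filter.Tendsto G (nhds 0) (nhds R) := hG0 ▸ hcG.tendsto
  have h1 : ∀ᶠ x in nhds (0 : ℝ), |κ| / s < G x := htend.eventually_const_lt hκs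
  set m : ℝ := min ε (min σ' (σ - σ')) with hm
  have hm0 : 0 < m := lt_min hε (lt_min h (by linarith))
  have h2 : ∀ᶠ x in nhds (0 : ℝ), x < m := eventually_lt_nhds hm0
  have h3 : ∀ᶠ x in nhdsWithin (0 : ℝ) (Set.Ioi 0), (|κ| / s < G x ∧ x < m) ∧ 0 < x :=
    (((h1.and h2).filter_mono nhdsWithin_le_nhds).and self_mem_nhdsWithin)
  obtain ⟨x, ⟨⟨hGx, hxm⟩, hx0⟩⟩ := h3.exists
  have hxε : x < ε := hxm.trans_le (min_le_left _ _)
  have hxσ' : x < σ' := hxm.trans_le ((min_le_right _ _).trans (min_le_left _ _))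
  have hxd : x < σ - σ' := hxm.trans_le ((min_le_right _ _).trans (min_le_right _ _))
  refine ⟨x, t * x, by positivity, by nlinarith, hxε, ?_⟩
  have hx0' : x ≠ 0 := ne_of_gt hx0
  have hκ₁ : Real.sqrt (t * x / x) = s := by
    rw [mul_div_assoc, div_self hx0', mul_one, ht, Real.sqrt_sq hs0.le]
  refine ⟨?_, ?_, ?_, ?_, ?_⟩
  · rw [hκ₁]; calc 1 - ε ≤ a := le_max_left _ _
      _ < s := hsa
  · nlinarith
  · nlinarith
  · rw [hκ₁, abs_div, abs_of_pos hs0]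
    exact div_pos hκ0 hs0
  · rw [hκ₁, abs_div, abs_of_pos hs0]
    have : (σ' - t * x) / (σ - x) = (σ' - t * x) / (σ - x) := rfl
    calc |κ| / s < G x := hGx
      _ = Real.sqrt ((σ' - t * x) / (σ - x)) *
          Real.exp (-(β - β') ^ 2 / (4 * (σ - x - (σ' - t * x)))) := by
        rw [hG]; ring_nf
      _ = _ := rfl
end

section
/- Let μ be a probability measure on ℝ × ZMod 2 whose characteristic function satisfies μ̂(s,0) = exp(−σs² + iβs) and μ̂(s,1) = κ·exp(−σ's² + iβ's) with 0 < σ' < σ and κ ≠ 0. Then μ is not infinitely divisible, i.e., it is not the case that for every n ≥ 1 there exist a probability measure ν on ℝ × ZMod 2 and a point (t,k) with μ equal to the n-fold convolution power of ν convolved with the point mass at (t,k). -/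
open MeasureTheory Complex

/-- Convolution of two measures on `ℝ × ZMod 2`. -/
noncomputable def convMeas (μ ν : Measure (ℝ × ZMod 2)) : Measure (ℝ × ZMod 2) :=
  (μ.prod ν).map (fun p => p.1 + p.2)

/-- `n`-fold convolution power of a measure on `ℝ × ZMod 2`, with the 0-th power being
the point mass at the identity. -/
noncomputable def convPow (μ : Measure (ℝ × ZMod 2)) : ℕ → Measure (ℝ × ZMod 2)
  | 0 => Measure.dirac 0
  | n + 1 => convMeas (convPow μ n) μ

noncomputable def charFn (ν : Measure (ℝ × ZMod 2)) (s : ℝ) (l : ZMod 2) : ℂ :=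
  ∫ p : ℝ × ZMod 2, Complex.exp (I * p.1 * s) * (-1 : ℂ) ^ (p.2 * l).val ∂ν

lemma chi_meas (s : ℝ) (l : ZMod 2) :
    Measurable (fun p : ℝ × ZMod 2 => Complex.exp (I * p.1 * s) * (-1 : ℂ) ^ (p.2 * l).val) := by
  apply Measurable.mul
  · exact (Complex.continuous_exp.comp
      ((continuous_const.mul Complex.continuous_ofReal).mul continuous_const)).measurable.comp
      measurable_fst
  · exact (Measurable.of_discrete (f := fun k : ZMod 2 => (-1:ℂ) ^ ((k*l).val))).comp measurable_snd

lemma neg_one_pow_add (x y : ZMod 2) :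
    ((-1:ℂ))^(((x+y)*1).val) = (-1)^((x*1).val) * (-1)^((y*1).val) := by
  rcases (by decide : ∀ z : ZMod 2, z = 0 ∨ z = 1) x with rfl | rfl <;>
    rcases (by decide : ∀ z : ZMod 2, z = 0 ∨ z = 1) y with rfl | rfl <;>
    simp [show ((2:ZMod 2))=0 from rfl, show ((1:ZMod 2)+1)=0 from rfl, ZMod.val_one]

lemma charFn_conv (μ ν : Measure (ℝ × ZMod 2)) [SFinite μ] [SFinite ν] (s : ℝ) (l : ZMod 2) :
    charFn (convMeas μ ν) s l = charFn μ s l * charFn ν s l := by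
  have hadd : Measurable (fun p : (ℝ × ZMod 2) × (ℝ × ZMod 2) => p.1 + p.2) := by
    have h1 : Measurable (fun p : (ℝ × ZMod 2) × (ℝ × ZMod 2) => p.1.1 + p.2.1) :=
      (measurable_fst.fst).add (measurable_snd.fst)
    have h2 : Measurable (fun p : (ℝ × ZMod 2) × (ℝ × ZMod 2) => p.1.2 + p.2.2) :=
      (Measurable.of_discrete (f := fun q : ZMod 2 × ZMod 2 => q.1 + q.2)).comp
        ((measurable_fst.snd).prodMk (measurable_snd.snd))
    exact h1.prodMk h2
  unfold charFn convMeas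
  rw [integral_map hadd.aemeasurable (chi_meas s l).aestronglyMeasurable]
  rw [← integral_prod_mul (fun p : ℝ × ZMod 2 => Complex.exp (I * p.1 * s) * (-1 : ℂ) ^ (p.2 * l).val)
      (fun p : ℝ × ZMod 2 => Complex.exp (I * p.1 * s) * (-1 : ℂ) ^ (p.2 * l).val)]
  congr 1
  funext p
  show Complex.exp (I * (↑(p.1.1 + p.2.1)) * s) * (-1 : ℂ) ^ ((p.1.2 + p.2.2) * l).val = _
  have hval : ((-1:ℂ))^(((p.1.2 + p.2.2)*l).val) = (-1)^((p.1.2*l).val) * (-1)^((p.2.2*l).val) := by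
    rcases (by decide : ∀ z : ZMod 2, z = 0 ∨ z = 1) l with rfl | rfl
    · simp
    · exact neg_one_pow_add p.1.2 p.2.2
  rw [hval]
  push_cast
  rw [mul_add, add_mul, Complex.exp_add]
  ring

lemma charFn_dirac (x : ℝ × ZMod 2) (s : ℝ) (l : ZMod 2) :
    charFn (Measure.dirac x) s l = Complex.exp (I * x.1 * s) * (-1 : ℂ) ^ (x.2 * l).val := by
  unfold charFn
  exact integral_dirac _ x

lemma measurable_add2 : Measurable (fun p : (ℝ × ZMod 2) × (ℝ × ZMod 2) => p.1 + p.2) := by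
  have h1 : Measurable (fun p : (ℝ × ZMod 2) × (ℝ × ZMod 2) => p.1.1 + p.2.1) :=
    (measurable_fst.fst).add (measurable_snd.fst)
  have h2 : Measurable (fun p : (ℝ × ZMod 2) × (ℝ × ZMod 2) => p.1.2 + p.2.2) :=
    (Measurable.of_discrete (f := fun q : ZMod 2 × ZMod 2 => q.1 + q.2)).comp
      ((measurable_fst.snd).prodMk (measurable_snd.snd))
  exact h1.prodMk h2

lemma convMeas_prob (μ ν : Measure (ℝ × ZMod 2)) (hμ : IsProbabilityMeasure μ)
    (hν : IsProbabilityMeasure ν) : IsProbabilityMeasure (convMeas μ ν) :=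
  Measure.isProbabilityMeasure_map measurable_add2.aemeasurable

lemma convPow_prob (ν : Measure (ℝ × ZMod 2)) (hν : IsProbabilityMeasure ν) (n : ℕ) :
    IsProbabilityMeasure (convPow ν n) := by
  induction n with
  | zero => exact Measure.dirac.isProbabilityMeasure
  | succ n ih => exact convMeas_prob _ _ ih hν

lemma charFn_pow (ν : Measure (ℝ × ZMod 2)) (hν : IsProbabilityMeasure ν) (n : ℕ) (s : ℝ)
    (l : ZMod 2) : charFn (convPow ν n) s l = (charFn ν s l) ^ n := by
  induction n with
  | zero =>
    show charFn (Measure.dirac 0) s l = 1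
    rw [charFn_dirac]
    simp
  | succ n ih =>
    have h1 : IsProbabilityMeasure (convPow ν n) := convPow_prob ν hν n
    show charFn (convMeas (convPow ν n) ν) s l = _
    rw [charFn_conv, ih, pow_succ]

lemma zmod2_cases : ∀ x : ZMod 2, x = 0 ∨ x = 1 := by decide

lemma abs_exp_I_mul (x s : ℝ) : ‖Complex.exp (I * x * s)‖ = 1 := by
  rw [Complex.norm_exp]; simp

lemma key_ineq (ν : Measure (ℝ × ZMod 2)) (hν : IsProbabilityMeasure ν) (s : ℝ) :
    ‖charFn ν s 1‖ ^ 2 + ‖charFn ν 0 1‖ ^ 2 ≤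
      ‖charFn ν s 0‖ ^ 2 + 1 := by
  classical
  -- the two fiber integrals
  set fa : ℝ → (ℝ × ZMod 2) → ℂ :=
    fun t p => Complex.exp (I * p.1 * t) * (if p.2 = 0 then 1 else 0) with hfa
  set fb : ℝ → (ℝ × ZMod 2) → ℂ :=
    fun t p => Complex.exp (I * p.1 * t) * (if p.2 = 1 then 1 else 0) with hfb
  have hmeas : ∀ (t : ℝ) (c : ZMod 2),
      Measurable (fun p : ℝ × ZMod 2 => Complex.exp (I * p.1 * t) * (if p.2 = c then (1:ℂ) else 0)) := by
    intro t c
    apply Measurable.mul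
    · exact (Complex.continuous_exp.comp
        ((continuous_const.mul Complex.continuous_ofReal).mul continuous_const)).measurable.comp
        measurable_fst
    · exact (Measurable.of_discrete (f := fun k : ZMod 2 => if k = c then (1:ℂ) else 0)).comp
        measurable_snd
  have hnorm : ∀ (t : ℝ) (c : ZMod 2) (p : ℝ × ZMod 2),
      ‖Complex.exp (I * p.1 * t) * (if p.2 = c then (1:ℂ) else 0)‖
        = (if p.2 = c then (1:ℝ) else 0) := by
    intro t c p
    rw [norm_mul]
    have h1 : ‖Complex.exp (I * p.1 * t)‖ = 1 := abs_exp_I_mul p.1 t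
    rw [h1, one_mul]
    by_cases h : p.2 = c <;> simp [h]
  have hint : ∀ (t : ℝ) (c : ZMod 2),
      Integrable (fun p : ℝ × ZMod 2 => Complex.exp (I * p.1 * t) * (if p.2 = c then (1:ℂ) else 0)) ν := by
    intro t c
    refine (integrable_const (1:ℝ)).mono' (hmeas t c).aestronglyMeasurable ?_
    filter_upwards with p
    rw [hnorm]
    by_cases h : p.2 = c <;> simp [h]
  have hintr : ∀ c : ZMod 2,
      Integrable (fun p : ℝ × ZMod 2 => (if p.2 = c then (1:ℝ) else 0)) ν := by
    intro c
    refine (integrable_const (1:ℝ)).mono' ?_ ?_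
    · exact ((Measurable.of_discrete (f := fun k : ZMod 2 => if k = c then (1:ℝ) else 0)).comp
        measurable_snd).aestronglyMeasurable
    · filter_upwards with p; by_cases h : p.2 = c <;> simp [h]
  set pa : ℝ := ∫ p : ℝ × ZMod 2, (if p.2 = 0 then (1:ℝ) else 0) ∂ν with hpa
  set pb : ℝ := ∫ p : ℝ × ZMod 2, (if p.2 = 1 then (1:ℝ) else 0) ∂ν with hpb
  have hpapb : pa + pb = 1 := by
    rw [hpa, hpb, ← integral_add (hintr 0) (hintr 1)]
    have : ∀ p : ℝ × ZMod 2,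
        (if p.2 = 0 then (1:ℝ) else 0) + (if p.2 = 1 then (1:ℝ) else 0) = 1 := by
      intro p
      rcases zmod2_cases p.2 with h | h <;> simp [h]
    simp only [this]
    simp
  have hpa0 : 0 ≤ pa := integral_nonneg (fun p => by positivity)
  have hpb0 : 0 ≤ pb := integral_nonneg (fun p => by positivity)
  -- decompositions
  have hsplit0 : ∀ t : ℝ, charFn ν t 0 = (∫ p, fa t p ∂ν) + ∫ p, fb t p ∂ν := by
    intro t
    rw [← integral_add (hint t 0) (hint t 1)]
    unfold charFn
    congr 1
    funext p
    rcases zmod2_cases p.2 with h | h <;> simp [hfa, hfb, h]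
  have hsplit1 : ∀ t : ℝ, charFn ν t 1 = (∫ p, fa t p ∂ν) - ∫ p, fb t p ∂ν := by
    intro t
    rw [← integral_sub (hint t 0) (hint t 1)]
    unfold charFn
    congr 1
    funext p
    rcases zmod2_cases p.2 with h | h <;>
      simp [hfa, hfb, h, ZMod.val_one]
  -- bounds on fiber integrals
  have hbound : ∀ (t : ℝ) (c : ZMod 2),
      ‖∫ p, Complex.exp (I * p.1 * t) * (if p.2 = c then (1:ℂ) else 0) ∂ν‖
        ≤ ∫ p : ℝ × ZMod 2, (if p.2 = c then (1:ℝ) else 0) ∂ν := by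
    intro t c
    refine (norm_integral_le_integral_norm _).trans ?_
    refine le_of_eq (integral_congr_ae ?_)
    filter_upwards with p
    exact hnorm t c p
  -- value at 0
  have ha0 : (∫ p, fa 0 p ∂ν) = (pa : ℂ) := by
    have he : (fun p : ℝ × ZMod 2 => fa 0 p)
        = fun p : ℝ × ZMod 2 => (((if p.2 = 0 then (1:ℝ) else 0) : ℝ) : ℂ) := by
      funext p; by_cases h : p.2 = 0 <;> simp [hfa, h]
    rw [he, hpa]; exact integral_ofReal
  have hb0 : (∫ p, fb 0 p ∂ν) = (pb : ℂ) := by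
    have he : (fun p : ℝ × ZMod 2 => fb 0 p)
        = fun p : ℝ × ZMod 2 => (((if p.2 = 1 then (1:ℝ) else 0) : ℝ) : ℂ) := by
      funext p; by_cases h : p.2 = 1 <;> simp [hfb, h]
    rw [he, hpb]; exact integral_ofReal
  -- now the complex arithmetic
  set a : ℂ := ∫ p, fa s p ∂ν
  set b : ℂ := ∫ p, fb s p ∂ν
  have hA : ‖a‖ ≤ pa := hbound s 0
  have hB : ‖b‖ ≤ pb := hbound s 1
  rw [hsplit0 s, hsplit1 s, hsplit1 0, ha0, hb0]
  rw [Complex.sq_norm, Complex.sq_norm, Complex.sq_norm]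
  rw [normSq_sub, normSq_add]
  have habs : ((pa:ℂ) - pb) = ((pa - pb : ℝ) : ℂ) := by push_cast; ring
  rw [habs, Complex.normSq_ofReal]
  have hre : |(a * (starRingEnd ℂ) b).re| ≤ pa * pb := by
    refine (Complex.abs_re_le_norm _).trans ?_
    rw [norm_mul, Complex.norm_conj]
    exact mul_le_mul hA hB (norm_nonneg b) hpa0
  nlinarith [hre, abs_nonneg ((a * (starRingEnd ℂ) b).re), neg_abs_le ((a * (starRingEnd ℂ) b).re)]

lemma abs_exp_gauss (c b s : ℝ) :
    ‖Complex.exp (-(c:ℂ) * s^2 + I * b * s)‖ = Real.exp (-c * s^2) := by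
  rw [Complex.norm_exp]
  congr 1
  simp [Complex.add_re, Complex.mul_re, Complex.mul_im, pow_two]

lemma pow_inj' {x y : ℝ} (hx : 0 ≤ x) (hy : 0 ≤ y) {n : ℕ} (hn : n ≠ 0) (hxy : x^n = y^n) :
    x = y := by
  rcases lt_trichotomy x y with hlt | he | hlt
  · exact absurd hxy (ne_of_lt (pow_lt_pow_left₀ hlt hx hn))
  · exact he
  · exact absurd hxy.symm (ne_of_lt (pow_lt_pow_left₀ hlt hy hn))

/-- A distribution in `Θ` with `0 < σ' < σ` and `κ ≠ 0` is not infinitely divisible. -/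
theorem not_infinitely_divisible (μ : Measure (ℝ × ZMod 2)) (hμ : IsProbabilityMeasure μ)
    (σ σ' β β' κ : ℝ) (h : 0 < σ') (h' : σ' < σ) (hκ : κ ≠ 0)
    (hchar : ∀ (s : ℝ) (l : ZMod 2),
      (∫ p : ℝ × ZMod 2, Complex.exp (I * p.1 * s) * (-1 : ℂ) ^ (p.2 * l).val ∂μ) =
        if l = 0 then Complex.exp (-(σ : ℂ) * s ^ 2 + I * β * s)
        else κ * Complex.exp (-(σ' : ℂ) * s ^ 2 + I * β' * s)) :
    ¬ (∀ n : ℕ, 1 ≤ n → ∃ (ν : Measure (ℝ × ZMod 2)) (x : ℝ × ZMod 2),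
        IsProbabilityMeasure ν ∧ μ = convMeas (convPow ν n) (Measure.dirac x)) := by
  intro hdiv
  have hσ : 0 < σ := h.trans h'
  set r : ℝ := (1 + Real.exp (-2*σ)) / (1 + Real.exp (-2*σ')) with hr
  have hden : (0:ℝ) < 1 + Real.exp (-2*σ') := by positivity
  have hrlt : r < 1 := by
    rw [hr, div_lt_one hden]
    have : Real.exp (-2*σ) < Real.exp (-2*σ') := Real.exp_lt_exp.mpr (by linarith)
    linarith
  have hr0 : (0:ℝ) ≤ r := by positivity
  have hk2 : (0:ℝ) < κ^2 := by positivity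
  obtain ⟨n, hn⟩ := exists_pow_lt_of_lt_one hk2 hrlt
  set m := n + 1 with hm
  have hmr : r ^ m < κ ^ 2 :=
    lt_of_le_of_lt (pow_le_pow_of_le_one hr0 hrlt.le (Nat.le_succ n)) hn
  obtain ⟨ν, x, hνp, heq⟩ := hdiv m (Nat.succ_le_succ (Nat.zero_le n))
  haveI : IsProbabilityMeasure (convPow ν m) := convPow_prob ν hνp m
  -- characteristic function relation
  have hcf : ∀ (s : ℝ) (l : ZMod 2),
      charFn μ s l = (charFn ν s l) ^ m *
        (Complex.exp (I * x.1 * s) * (-1 : ℂ) ^ (x.2 * l).val) := by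
    intro s l
    calc charFn μ s l = charFn (convMeas (convPow ν m) (Measure.dirac x)) s l := by rw [← heq]
    _ = charFn (convPow ν m) s l * charFn (Measure.dirac x) s l := charFn_conv _ _ s l
    _ = (charFn ν s l) ^ m * (Complex.exp (I * x.1 * s) * (-1 : ℂ) ^ (x.2 * l).val) := by
        rw [charFn_pow ν hνp, charFn_dirac]
  have habs : ∀ (s : ℝ) (l : ZMod 2),
      ‖charFn μ s l‖ = ‖charFn ν s l‖ ^ m := by
    intro s l
    rw [hcf s l, norm_mul, norm_pow, norm_mul, abs_exp_I_mul, norm_pow]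
    simp
  -- values of the characteristic function of μ
  have h0 : ∀ s : ℝ, ‖charFn μ s 0‖ = Real.exp (-σ * s^2) := by
    intro s
    have hc := hchar s 0
    rw [if_pos rfl] at hc
    show ‖∫ p : ℝ × ZMod 2,
      Complex.exp (I * p.1 * s) * (-1 : ℂ) ^ (p.2 * 0).val ∂μ‖ = _
    rw [hc, abs_exp_gauss]
  have h1 : ∀ s : ℝ, ‖charFn μ s 1‖ = |κ| * Real.exp (-σ' * s^2) := by
    intro s
    have hc := hchar s 1
    rw [if_neg (by decide)] at hc
    show ‖∫ p : ℝ × ZMod 2,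
      Complex.exp (I * p.1 * s) * (-1 : ℂ) ^ (p.2 * 1).val ∂μ‖ = _
    rw [hc, norm_mul, abs_exp_gauss, Complex.norm_real, Real.norm_eq_abs]
  -- specialize to s = √m
  set s : ℝ := Real.sqrt m with hs
  have hs2 : s ^ 2 = (m : ℝ) := Real.sq_sqrt (by positivity)
  set A := ‖charFn ν s 0‖ with hA
  set B := ‖charFn ν s 1‖ with hB
  set B0 := ‖charFn ν 0 1‖ with hB0
  have hA0 : 0 ≤ A := norm_nonneg _
  have hBnn : 0 ≤ B := norm_nonneg _
  have hB0nn : 0 ≤ B0 := norm_nonneg _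
  have hAm : A ^ m = Real.exp (-σ) ^ m := by
    rw [← habs s 0, h0 s, hs2, ← Real.exp_nat_mul]
    congr 1
    ring
  have hB0m : B0 ^ m = |κ| := by
    rw [← habs 0 1, h1 0]
    simp
  have hBm : B ^ m = (B0 * Real.exp (-σ')) ^ m := by
    rw [← habs s 1, h1 s, hs2, mul_pow, hB0m, ← Real.exp_nat_mul]
    congr 1
    ring
  have hAe : A = Real.exp (-σ) :=
    pow_inj' hA0 (Real.exp_nonneg _) (by omega) hAm
  have hBe : B = B0 * Real.exp (-σ') :=
    pow_inj' hBnn (by positivity) (by omega) hBm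
  -- the key inequality
  have hki := key_ineq ν hνp s
  rw [← hA, ← hB, ← hB0, hAe, hBe] at hki
  have he2 : ∀ c : ℝ, Real.exp (-c) ^ 2 = Real.exp (-2*c) := by
    intro c
    rw [← Real.exp_nat_mul]
    norm_num
  rw [mul_pow, he2, he2] at hki
  -- deduce B0^2 ≤ r
  have hB0r : B0 ^ 2 ≤ r := by
    rw [hr, le_div_iff₀ hden]
    nlinarith
  -- conclude
  have hfinal : κ ^ 2 ≤ r ^ m := by
    calc κ ^ 2 = |κ| ^ 2 := (_root_.sq_abs κ).symm
    _ = (B0 ^ m) ^ 2 := by rw [hB0m]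
    _ = (B0 ^ 2) ^ m := by rw [← pow_mul, ← pow_mul, Nat.mul_comm]
    _ ≤ r ^ m := pow_le_pow_left₀ (by positivity) hB0r m
  linarith
end
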